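/- arXiv:2207.14188 — 9 statements merged into one kernel-verified Lean document; each statement's English description precedes it below -/
import Mathlib

section
/- For all integers r ≥ 0 and n ≥ 1, S_2^{(r)}(n) = ((2n+r)/(r+2)) · S_1^{(r)}(n), i.e., (r+2) · S_2^{(r)}(n) = (2n+r) · S_1^{(r)}(n) as rational numbers. -/
/-- Hyper-sum of powers of integers: `S m 0 n = n^m` and
`S m (r+1) n = ∑ i in [1..n], S m r i`. -/
def S (m : ℕ) : ℕ → ℕ → ℚ
  | 0, n => (n : ℚ) ^ m
  | r + 1, n => ∑ i ∈ Finset.Icc 1 n, S m r i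

/-!
Both hyper-sums are sums of binomial coefficients: `n = C(n, 1)` and `n² = C(n + 1, 2) + C(n, 2)`,
and the hockey-stick identity turns each summation `∑_{i=1}^n C(i + k, j)` with `k < j` into
`C(n + k + 1, j + 1)`. Hence `S₁⁽ʳ⁾(n) = C(n + r, r + 1)` and
`S₂⁽ʳ⁾(n) = C(n + r + 1, r + 2) + C(n + r, r + 2)`, and the absorption identities
`(r + 2) C(N + 1, r + 2) = (N + 1) C(N, r + 1)`, `(r + 2) C(N, r + 2) = (N - r - 1) C(N, r + 1)`
with `N = n + r` give the claimed proportionality.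
-/

open Finset

namespace Nat

theorem sum_Icc_one_choose_add {k j : ℕ} (hkj : k < j) (n : ℕ) :
    ∑ i ∈ Icc 1 n, (i + k).choose j = (n + k + 1).choose (j + 1) := by
  induction n with
  | zero => simp [choose_eq_zero_of_lt (succ_lt_succ hkj)]
  | succ n ih =>
    rw [sum_Icc_succ_top (by omega), ih, add_right_comm n 1 k, choose_succ_succ' (n + k + 1),
      add_comm]

end Nat

theorem S_succ (m r n : ℕ) : S m (r + 1) n = ∑ i ∈ Icc 1 n, S m r i := rfl

theorem S_one_eq_choose (r n : ℕ) : S 1 r n = (n + r).choose (r + 1) := by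
  induction r generalizing n with
  | zero => simp [S]
  | succ r ih =>
    simp only [S_succ, ih]
    rw [← Nat.cast_sum, Nat.sum_Icc_one_choose_add (Nat.lt_succ_self r), ← add_assoc]

theorem S_two_eq_choose (r n : ℕ) :
    S 2 r n = (n + r + 1).choose (r + 2) + (n + r).choose (r + 2) := by
  induction r generalizing n with
  | zero =>
    simp only [S, add_zero, zero_add]
    push_cast [Nat.cast_choose_two]
    ring
  | succ r ih =>
    have hockey_succ : ∑ i ∈ Icc 1 n, (i + r + 1).choose (r + 2) = (n + r + 2).choose (r + 3) :=
      Nat.sum_Icc_one_choose_add (k := r + 1) (by omega) n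
    simp only [S_succ, ih, sum_add_distrib, ← Nat.cast_sum, hockey_succ,
      Nat.sum_Icc_one_choose_add (by omega : r < r + 2)]
    ring_nf

theorem choose_add_choose_mul_eq_mul_choose {n : ℕ} (hn : 1 ≤ n) (r : ℕ) :
    ((r : ℚ) + 2) * ((n + r + 1).choose (r + 2) + (n + r).choose (r + 2))
      = (2 * n + r) * (n + r).choose (r + 1) := by
  have absorb_succ : ((n + r + 1 : ℕ) : ℚ) * (n + r).choose (r + 1)
      = (n + r + 1).choose (r + 2) * (r + 2) :=
    mod_cast Nat.add_one_mul_choose_eq (n + r) (r + 1)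
  have absorb : ((n + r).choose (r + 2) : ℚ) * (r + 2)
      = (n + r).choose (r + 1) * ((n + r - (r + 1) : ℕ) : ℚ) :=
    mod_cast Nat.choose_succ_right_eq (n + r) (r + 1)
  rw [show n + r - (r + 1) = n - 1 by omega, Nat.cast_sub hn] at absorb
  push_cast at absorb_succ absorb
  linear_combination absorb - absorb_succ

theorem stmt_1 (r n : ℕ) (hn : 1 ≤ n) :
    ((r : ℚ) + 2) * S 2 r n = (2 * (n : ℚ) + r) * S 1 r n := by
  rw [S_two_eq_choose, S_one_eq_choose]
  exact choose_add_choose_mul_eq_mul_choose hn r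
end

section
/- For all integers m ≥ 0, r ≥ 1, and n ≥ 1, the recurrence r · S_m^{(r+1)}(n) = (n+r) · S_m^{(r)}(n) − S_{m+1}^{(r)}(n) holds. -/
/-! Induction on `r`. Swapping the double sum gives `S_m^(r+2)(n) = ∑ (n + 1 - i) S_m^(r)(i)`, and
summing the inductive hypothesis at each `i ≤ n` turns `S_{m+1}^(r+1)(n)` into sums of `S_m^(r)` and
`S_m^(r+1)`, after which both sides are the same sum over `i`. -/

/-- The `i`-th partial sum contains `f j` exactly when `j ≤ i ≤ n`, i.e. `n + 1 - j` times. -/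
theorem Finset.sum_Icc_one_sum_Icc_one {R : Type*} [CommRing R] (f : ℕ → R) (n : ℕ) :
    ∑ i ∈ Icc 1 n, ∑ j ∈ Icc 1 i, f j = ∑ j ∈ Icc 1 n, ((n : R) + 1 - j) * f j := by
  induction n with
  | zero => simp
  | succ n ih =>
    simp only [sum_Icc_succ_top (Nat.le_add_left 1 n), ih, Nat.cast_succ, add_sub_right_comm _ (1 : R),
      add_mul _ (1 : R), one_mul, sum_add_distrib]
    ring

theorem S_succ_succ (m r n : ℕ) :
    S m (r + 2) n = ∑ i ∈ Finset.Icc 1 n, ((n : ℚ) + 1 - i) * S m r i :=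
  Finset.sum_Icc_one_sum_Icc_one (S m r) n

theorem stmt_2_general (m r n : ℕ) :
    (r : ℚ) * S m (r + 1) n = ((n : ℚ) + r) * S m r n - S (m + 1) r n := by
  induction r generalizing n with
  | zero => simp only [S]; push_cast; ring
  | succ r ih =>
    have termwise (i : ℕ) : ((n : ℚ) + (r + 1)) * S m r i - S (m + 1) r i
        = r * S m (r + 1) i + ((n : ℚ) + 1 - i) * S m r i := by
      linear_combination -ih i
    calc ((r + 1 : ℕ) : ℚ) * S m (r + 1 + 1) n = r * S m (r + 2) n + S m (r + 2) n := by
          push_cast; ring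
      _ = ∑ i ∈ Finset.Icc 1 n, (r * S m (r + 1) i + ((n : ℚ) + 1 - i) * S m r i) := by
          rw [Finset.sum_add_distrib, ← Finset.mul_sum, ← S_succ_succ]; rfl
      _ = ∑ i ∈ Finset.Icc 1 n, (((n : ℚ) + (r + 1)) * S m r i - S (m + 1) r i) :=
          Finset.sum_congr rfl fun i _ => (termwise i).symm
      _ = ((n : ℚ) + (r + 1 : ℕ)) * S m (r + 1) n - S (m + 1) (r + 1) n := by
          rw [Finset.sum_sub_distrib, ← Finset.mul_sum]; push_cast; rfl

theorem stmt_2 (m r n : ℕ) (hr : 1 ≤ r) (hn : 1 ≤ n) :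
    (r : ℚ) * S m (r + 1) n = ((n : ℚ) + r) * S m r n - S (m + 1) r n :=
  stmt_2_general m r n
end

section
/- For all integers m ≥ 0, r ≥ 1, and n ≥ 1, Σ_{j=1}^n j · S_m^{(r-1)}(j) = (n+1) · S_m^{(r)}(n) − S_m^{(r+1)}(n). -/
open Finset

theorem sum_Icc_natCast_mul_eq {R : Type*} [CommRing R] (f : ℕ → R) (n : ℕ) :
    ∑ j ∈ Icc 1 n, (j : R) * f j
      = (n + 1) * ∑ i ∈ Icc 1 n, f i - ∑ i ∈ Icc 1 n, ∑ k ∈ Icc 1 i, f k := by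
  induction n with
  | zero => simp
  | succ n ih =>
    simp only [sum_Icc_succ_top (Nat.le_add_left 1 n), ih]
    push_cast
    ring

theorem stmt_4_general (m r n : ℕ) (hr : 1 ≤ r) :
    ∑ j ∈ Finset.Icc 1 n, (j : ℚ) * S m (r - 1) j
      = ((n : ℚ) + 1) * S m r n - S m (r + 1) n := by
  obtain ⟨s, rfl⟩ := Nat.exists_eq_add_of_le' hr
  -- `S m (s + 1)` and `S m (s + 2)` unfold definitionally to the two partial sums of `S m s`.
  exact sum_Icc_natCast_mul_eq (S m s) n

theorem stmt_4 (m r n : ℕ) (hr : 1 ≤ r) (hn : 1 ≤ n) :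
    ∑ j ∈ Finset.Icc 1 n, (j : ℚ) * S m (r - 1) j
      = ((n : ℚ) + 1) * S m r n - S m (r + 1) n :=
  stmt_4_general m r n hr
end

section
/- For all integers m ≥ 2, r ≥ 2, and n ≥ 1, the following holds in ℚ: m · S_{m-1}^{(r+1)}(n) = S_m^{(r)}(n) + (m/2) · S_{m-1}^{(r)}(n) + Σ_{k=1}^{m-2} C(m,k) · B_{m-k} · S_k^{(r)}(n). -/
lemma faul (M n : ℕ) :
    ((M+2 : ℕ) : ℚ) * ∑ i ∈ Finset.Icc 1 n, (i:ℚ)^(M+1)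
      = (n:ℚ)^(M+2) + (((M+2:ℕ):ℚ)/2) * (n:ℚ)^(M+1)
        + ∑ k ∈ Finset.Icc 1 M, ((M+2).choose k : ℚ) * bernoulli (M+2-k) * (n:ℚ)^k := by
  rw [show Finset.Icc 1 n = Finset.Ico 1 (n+1) from (Finset.Ico_add_one_right_eq_Icc 1 n).symm,
      sum_Ico_pow n (M+1), Finset.mul_sum]
  have hstep : ∀ i ∈ Finset.range (M+2),
      ((M+2:ℕ):ℚ) * (bernoulli' i * ((M+1+1).choose i) * (n:ℚ)^(M+1+1-i) / (((M+1:ℕ):ℚ)+1))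
      = bernoulli' i * ((M+2).choose i) * (n:ℚ)^(M+2-i) := by
    intro i _
    have hne : (((M+1:ℕ):ℚ)+1) ≠ 0 := by positivity
    push_cast
    field_simp
    ring
  rw [Finset.sum_congr rfl hstep, Finset.sum_range_succ', Finset.sum_range_succ']
  have h0 : bernoulli' 0 * ((M+2).choose 0 : ℚ) * (n:ℚ)^(M+2-0) = (n:ℚ)^(M+2) := by
    norm_num
  have h1 : bernoulli' (0+1) * ((M+2).choose (0+1) : ℚ) * (n:ℚ)^(M+2-(0+1))
      = (((M+2:ℕ):ℚ)/2) * (n:ℚ)^(M+1) := by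
    rw [bernoulli'_one, Nat.choose_one_right, show M+2-(0+1) = M+1 from rfl]
    push_cast
    ring
  rw [h0, h1]
  have hmain : ∑ i ∈ Finset.range M,
        bernoulli' (i+1+1) * (((M+2).choose (i+1+1)) : ℚ) * (n:ℚ)^(M+2-(i+1+1))
      = ∑ k ∈ Finset.Icc 1 M, ((M+2).choose k : ℚ) * bernoulli (M+2-k) * (n:ℚ)^k := by
    refine Finset.sum_nbij' (fun i => M - i) (fun k => M - k) ?_ ?_ ?_ ?_ ?_
    · intro i hi
      simp only [Finset.mem_range] at hi
      simp only [Finset.mem_Icc]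
      omega
    · intro k hk
      simp only [Finset.mem_Icc] at hk
      simp only [Finset.mem_range]
      omega
    · intro i hi; simp only [Finset.mem_range] at hi; show M - (M - i) = i; omega
    · intro k hk; simp only [Finset.mem_Icc] at hk; show M - (M - k) = k; omega
    · intro i hi
      simp only [Finset.mem_range] at hi
      show _ = ((M+2).choose (M-i) : ℚ) * bernoulli (M+2-(M-i)) * (n:ℚ)^(M-i)
      have h1 : M + 2 - (M - i) = i + 2 := by omega
      have h2 : (M+2).choose (M - i) = (M+2).choose (i+2) := by
        rw [show M - i = (M+2)-(i+2) by omega, Nat.choose_symm (by omega)]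
      have h3 : M + 2 - (i+1+1) = M - i := by omega
      rw [h1, h2, h3, ← bernoulli_eq_bernoulli'_of_ne_one (by omega)]
      ring
  rw [hmain]; ring

lemma key (M : ℕ) : ∀ (r n : ℕ),
    ((M+2 : ℕ) : ℚ) * S (M+1) (r + 1) n
      = S (M+2) r n + (((M+2:ℕ) : ℚ) / 2) * S (M+1) r n
        + ∑ k ∈ Finset.Icc 1 M,
            ((M+2).choose k : ℚ) * bernoulli (M+2 - k) * S k r n := by
  intro r
  induction r with
  | zero =>
    intro n
    have h1 : S (M+1) (0+1) n = ∑ i ∈ Finset.Icc 1 n, (i:ℚ)^(M+1) := by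
      show S (M+1) (0+1) n = _
      rw [show S (M+1) (0+1) n = ∑ i ∈ Finset.Icc 1 n, S (M+1) 0 i from rfl]
      rfl
    rw [h1, faul]
    rfl
  | succ r ih =>
    intro n
    rw [show S (M+1) (r+1+1) n = ∑ i ∈ Finset.Icc 1 n, S (M+1) (r+1) i from rfl,
        show S (M+2) (r+1) n = ∑ i ∈ Finset.Icc 1 n, S (M+2) r i from rfl,
        show S (M+1) (r+1) n = ∑ i ∈ Finset.Icc 1 n, S (M+1) r i from rfl,
        Finset.mul_sum]
    have hk : ∀ k, S k (r+1) n = ∑ i ∈ Finset.Icc 1 n, S k r i := fun k => rfl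
    simp only [hk, ih, Finset.sum_add_distrib, Finset.mul_sum]
    rw [Finset.sum_comm]

theorem stmt_7 (m r n : ℕ) (hm : 2 ≤ m) (hr : 2 ≤ r) (hn : 1 ≤ n) :
    (m : ℚ) * S (m - 1) (r + 1) n
      = S m r n + ((m : ℚ) / 2) * S (m - 1) r n
        + ∑ k ∈ Finset.Icc 1 (m - 2),
            (m.choose k : ℚ) * bernoulli (m - k) * S k r n := by
  obtain ⟨M, rfl⟩ : ∃ M, m = M + 2 := ⟨m - 2, by omega⟩
  have := key M r n
  simpa using this
end

section
/- For all positive integers r and m and all n ≥ 1, there exists a polynomial G of degree at most m−1 with rational coefficients such that S_m^{(r)}(n) = S_1^{(r)}(n) · G(n + r/2), and moreover G can be chosen independent of n (one polynomial works for all n). -/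
open Polynomial Finset

theorem ascPochhammer_dvd_of_eval_neg_eq_zero {R : Type*} [CommRing R] [IsDomain R] [CharZero R]
    {P : R[X]} {n : ℕ} (h : ∀ k < n, P.eval (-(k : R)) = 0) : ascPochhammer R n ∣ P := by
  induction n with
  | zero => simp
  | succ n ih =>
    obtain ⟨Q, rfl⟩ := ih fun k hk => h k (by omega)
    have hA : (ascPochhammer R n).eval (-(n : R)) ≠ 0 := by
      simp
    have hQ : Q.IsRoot (-(n : R)) := by
      simpa [hA] using h n n.lt_add_one
    obtain ⟨T, rfl⟩ := dvd_iff_isRoot.mpr hQ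
    rw [ascPochhammer_succ_right, ← mul_assoc, sub_eq_add_neg, ← C_neg, neg_neg]
    exact dvd_mul_right _ _

section Summation

variable {R : Type*} [CommRing R] {P Q : R[X]}

theorem eval_natCast_eq_sum_Icc (h0 : Q.eval 0 = 0)
    (hΔ : ∀ x, Q.eval (x + 1) - Q.eval x = P.eval (x + 1)) (n : ℕ) :
    Q.eval (n : R) = ∑ i ∈ Icc 1 n, P.eval (i : R) := by
  induction n with
  | zero => simpa using h0
  | succ n ih =>
    rw [sum_Icc_succ_top (by omega), ← ih, Nat.cast_succ, ← hΔ]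
    ring

theorem ascPochhammer_succ_dvd_of_eval_add_one_sub_eval [IsDomain R] [CharZero R] {n : ℕ}
    (hP : ascPochhammer R n ∣ P) (h0 : Q.eval 0 = 0)
    (hΔ : ∀ x, Q.eval (x + 1) - Q.eval x = P.eval (x + 1)) :
    ascPochhammer R (n + 1) ∣ Q := by
  obtain ⟨T, rfl⟩ := hP
  refine ascPochhammer_dvd_of_eval_neg_eq_zero fun k hk => ?_
  induction k with
  | zero => simpa using h0
  | succ k ih =>
    have hPk : (ascPochhammer R n * T).eval (-(k : R)) = 0 := by
      rw [eval_mul, ascPochhammer_eval_neg_coe_nat_of_lt (by omega), zero_mul]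
    have := hΔ (-((k + 1 : ℕ) : R))
    rw [show -((k + 1 : ℕ) : R) + 1 = -(k : R) by push_cast; ring, hPk, ih (by omega)] at this
    simpa using this

end Summation

theorem natDegree_bernoulli_le (n : ℕ) : (Polynomial.bernoulli n).natDegree ≤ n :=
  natDegree_le_iff_coeff_eq_zero.mpr fun i hi => by
    rw [coeff_bernoulli, if_neg (by exact_mod_cast hi.not_ge)]

theorem exists_eval_add_one_sub_eval_eq_pow (p : ℕ) :
    ∃ Q : ℚ[X], Q.natDegree ≤ p + 1 ∧ Q.eval 0 = 0 ∧
      ∀ x, Q.eval (x + 1) - Q.eval x = (x + 1) ^ p := by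
  refine ⟨C (p + 1 : ℚ)⁻¹ *
    ((Polynomial.bernoulli (p + 1)).comp (X + 1) - C ((Polynomial.bernoulli (p + 1)).eval 1)),
    ?_, by simp, fun x => ?_⟩
  · refine (natDegree_C_mul_le _ _).trans ?_
    rw [natDegree_sub_C, natDegree_comp, ← C_1, natDegree_X_add_C, mul_one]
    exact natDegree_bernoulli_le _
  · have := bernoulli_eval_one_add (p + 1) (x + 1)
    simp only [eval_mul, eval_C, eval_sub, eval_comp, eval_add, eval_X, eval_one]
    rw [add_comm (1 : ℚ) (x + 1)] at this
    rw [← mul_sub, sub_sub_sub_cancel_right, this]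
    push_cast
    field_simp
    ring

theorem exists_eval_add_one_sub_eval_eq (P : ℚ[X]) :
    ∃ Q : ℚ[X], Q.natDegree ≤ P.natDegree + 1 ∧ Q.eval 0 = 0 ∧
      ∀ x, Q.eval (x + 1) - Q.eval x = P.eval (x + 1) := by
  choose Q hdeg h0 hΔ using exists_eval_add_one_sub_eval_eq_pow
  refine ⟨∑ k ∈ range (P.natDegree + 1), C (P.coeff k) * Q k, ?_, by simp [eval_finsetSum, h0],
    fun x => ?_⟩
  · refine natDegree_sum_le_of_forall_le _ _ fun k hk => (natDegree_C_mul_le _ _).trans ?_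
    exact (hdeg k).trans (by simpa using mem_range.mp hk)
  · simp only [eval_finsetSum, eval_mul, eval_C, ← sum_sub_distrib, ← mul_sub, hΔ]
    rw [eval_eq_sum_range]

theorem S_one_right (m r : ℕ) : S m r 1 = 1 := by
  induction r with
  | zero => simp [S]
  | succ r ih => simp [S, ih]

theorem exists_eval_eq_S {m : ℕ} (hm : m ≠ 0) (r : ℕ) :
    ∃ P : ℚ[X], P.natDegree ≤ m + r ∧ ascPochhammer ℚ (r + 1) ∣ P ∧
      ∀ n : ℕ, P.eval (n : ℚ) = S m r n := by
  induction r with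
  | zero =>
    exact ⟨X ^ m, by simp, by simpa using dvd_pow_self (X : ℚ[X]) hm, fun n => by simp [S]⟩
  | succ r ih =>
    obtain ⟨P, hPdeg, hPdvd, hP⟩ := ih
    obtain ⟨Q, hQdeg, h0, hΔ⟩ := exists_eval_add_one_sub_eval_eq P
    refine ⟨Q, by omega, ascPochhammer_succ_dvd_of_eval_add_one_sub_eval hPdvd h0 hΔ, fun n => ?_⟩
    simp [eval_natCast_eq_sum_Icc h0 hΔ, S, hP]

theorem exists_S_eq_ascPochhammer_mul {m : ℕ} (hm : m ≠ 0) (r : ℕ) :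
    ∃ Q : ℚ[X], Q.natDegree ≤ m - 1 ∧
      ∀ n : ℕ, S m r n = (ascPochhammer ℚ (r + 1)).eval (n : ℚ) * Q.eval (n : ℚ) := by
  obtain ⟨P, hdeg, ⟨Q, rfl⟩, hP⟩ := exists_eval_eq_S hm r
  refine ⟨Q, ?_, fun n => by rw [← hP, eval_mul]⟩
  rcases eq_or_ne Q 0 with rfl | hQ
  · simp
  · rw [(monic_ascPochhammer ℚ (r + 1)).natDegree_mul' hQ, ascPochhammer_natDegree] at hdeg
    omega

theorem stmt_8_general (r m : ℕ) (hm : 1 ≤ m) :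
    ∃ G : Polynomial ℚ, G.natDegree ≤ m - 1 ∧
      ∀ n : ℕ, 1 ≤ n →
        S m r n = S 1 r n * G.eval ((n : ℚ) + r / 2) := by
  obtain ⟨Q₁, hQ₁deg, hQ₁⟩ := exists_S_eq_ascPochhammer_mul one_ne_zero r
  obtain ⟨Q, hQdeg, hQ⟩ := exists_S_eq_ascPochhammer_mul (by omega : m ≠ 0) r
  obtain ⟨c, rfl⟩ : ∃ c, Q₁ = C c := ⟨_, eq_C_of_natDegree_le_zero hQ₁deg⟩
  have hc : c ≠ 0 := by
    rintro rfl
    simpa [S_one_right] using hQ₁ 1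
  refine ⟨C c⁻¹ * Q.comp (X - C (r / 2 : ℚ)), ?_, fun n _ => ?_⟩
  · refine (natDegree_C_mul_le _ _).trans ?_
    rwa [natDegree_comp, natDegree_X_sub_C, mul_one]
  · simp only [hQ, hQ₁, eval_mul, eval_C, eval_comp, eval_sub, eval_X, add_sub_cancel_right]
    rw [mul_assoc, mul_inv_cancel_left₀ hc]

theorem stmt_8 (r m : ℕ) (hr : 1 ≤ r) (hm : 1 ≤ m) :
    ∃ G : Polynomial ℚ, G.natDegree ≤ m - 1 ∧
      ∀ n : ℕ, 1 ≤ n →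
        S m r n = S 1 r n * G.eval ((n : ℚ) + r / 2) :=
  stmt_8_general r m hm
end

section
/- For all positive integers r and m, there exists a polynomial G ∈ ℚ[X] of degree m−1 satisfying G(−X) = (−1)^{m-1} G(X) (i.e., G is even if m is odd and odd if m is even) such that S_m^{(r)}(n) = C(n+r, r+1) · G(n + r/2) for all positive integers n. -/
open Polynomial

namespace Polynomial

section CommRing

variable {R : Type*} [CommRing R]

theorem comp_X_sub_one_eq_taylor (Q : R[X]) : Q.comp (X - 1) = taylor (-1) Q := by
  rw [taylor_apply, map_neg, map_one, ← sub_eq_add_neg]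

theorem degree_sub_comp_X_sub_one_lt {Q : R[X]} (hQ : Q ≠ 0) :
    (Q - Q.comp (X - 1)).degree < Q.degree := by
  rw [comp_X_sub_one_eq_taylor]
  exact degree_sub_lt_left (degree_taylor Q _).symm hQ (by rw [leadingCoeff_taylor])

theorem sub_comp_X_sub_one_mem_degreeLT {n : ℕ} {Q : R[X]} (hQ : Q ∈ degreeLT R (n + 1)) :
    Q - Q.comp (X - 1) ∈ degreeLT R n := by
  rcases eq_or_ne Q 0 with rfl | hQ0
  · simp
  rw [mem_degreeLT] at hQ ⊢
  exact (degree_sub_comp_X_sub_one_lt hQ0).trans_le (Order.le_of_lt_succ hQ)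

theorem mem_degreeLT_natDegree_add_one (P : R[X]) : P ∈ degreeLT R (P.natDegree + 1) :=
  mem_degreeLT.2 (degree_le_natDegree.trans_lt (by exact_mod_cast Nat.lt_succ_self _))

theorem eq_zero_of_sub_comp_X_sub_one_eq_zero [IsDomain R] [CharZero R] {Q : R[X]}
    (hΔ : Q - Q.comp (X - 1) = 0) (h0 : Q.eval 0 = 0) : Q = 0 := by
  have hroot : ∀ k : ℕ, Q.eval (-(k : R)) = 0 := by
    intro k
    induction k with
    | zero => simpa using h0
    | succ k ih =>
      have := congrArg (eval (-(k : R))) hΔ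
      simp only [eval_sub, eval_comp, eval_X, eval_one, ih, eval_zero] at this
      rw [Nat.cast_succ, neg_add', ← neg_eq_zero, ← this, zero_sub]
  refine eq_zero_of_infinite_isRoot Q (Set.infinite_of_injective_forall_mem ?_ hroot)
  exact neg_injective.comp Nat.cast_injective

end CommRing

section Field

variable {K : Type*} [Field K] [CharZero K]

theorem exists_sub_comp_X_sub_one_eq {n : ℕ} {P : K[X]} (hP : P ∈ degreeLT K n) :
    ∃ Q ∈ degreeLT K (n + 1), Q - Q.comp (X - 1) = P ∧ Q.eval 0 = 0 := by
  -- `Φ Q = (Q - Q.comp (X - 1), Q.eval 0)`; both sides have dimension `n + 1`.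
  let Φ : degreeLT K (n + 1) →ₗ[K] degreeLT K n × K :=
    LinearMap.prod
      (LinearMap.codRestrict (degreeLT K n)
        ((LinearMap.id - (aeval (X - 1 : K[X])).toLinearMap) ∘ₗ (degreeLT K (n + 1)).subtype)
        fun Q => sub_comp_X_sub_one_mem_degreeLT Q.2)
      (leval 0 ∘ₗ (degreeLT K (n + 1)).subtype)
  have hΦ : ∀ Q, ((Φ Q).1 : K[X]) = Q - (Q : K[X]).comp (X - 1) ∧ (Φ Q).2 = (Q : K[X]).eval 0 :=
    fun Q => ⟨rfl, rfl⟩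
  have hinj : Function.Injective Φ := by
    rw [← LinearMap.ker_eq_bot, LinearMap.ker_eq_bot']
    intro Q hQ
    have h1 := hΦ Q
    rw [hQ] at h1
    exact Subtype.ext (eq_zero_of_sub_comp_X_sub_one_eq_zero h1.1.symm h1.2.symm)
  have hrank : Module.finrank K (degreeLT K (n + 1)) = Module.finrank K (degreeLT K n × K) := by
    rw [Module.finrank_prod, Module.finrank_self, Module.finrank_eq_card_basis (degreeLT.basis K _),
      Module.finrank_eq_card_basis (degreeLT.basis K _), Fintype.card_fin, Fintype.card_fin]
  obtain ⟨Q, hQ⟩ :=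
    (LinearMap.injective_iff_surjective_of_finrank_eq_finrank hrank).1 hinj (⟨P, hP⟩, 0)
  have h1 := hΦ Q
  rw [hQ] at h1
  exact ⟨Q, Q.2, h1.1.symm, h1.2.symm⟩

/-- The discrete antiderivative of `P` vanishing at `0`; it is unique by `eq_antidiff`. -/
noncomputable def antidiff (P : K[X]) : K[X] :=
  (exists_sub_comp_X_sub_one_eq (mem_degreeLT_natDegree_add_one P)).choose

theorem antidiff_mem_degreeLT (P : K[X]) : antidiff P ∈ degreeLT K (P.natDegree + 2) :=
  (exists_sub_comp_X_sub_one_eq (mem_degreeLT_natDegree_add_one P)).choose_spec.1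

theorem antidiff_sub_comp_X_sub_one (P : K[X]) : antidiff P - (antidiff P).comp (X - 1) = P :=
  (exists_sub_comp_X_sub_one_eq (mem_degreeLT_natDegree_add_one P)).choose_spec.2.1

@[simp]
theorem eval_zero_antidiff (P : K[X]) : (antidiff P).eval 0 = 0 :=
  (exists_sub_comp_X_sub_one_eq (mem_degreeLT_natDegree_add_one P)).choose_spec.2.2

theorem eq_antidiff {P Q : K[X]} (hΔ : Q - Q.comp (X - 1) = P) (h0 : Q.eval 0 = 0) :
    Q = antidiff P := by
  refine sub_eq_zero.1 (eq_zero_of_sub_comp_X_sub_one_eq_zero ?_ (by simp [h0]))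
  rw [sub_comp]
  linear_combination hΔ - antidiff_sub_comp_X_sub_one P

theorem antidiff_ne_zero {P : K[X]} (hP : P ≠ 0) : antidiff P ≠ 0 :=
  fun h => hP (by rw [← antidiff_sub_comp_X_sub_one P, h, zero_comp, sub_zero])

theorem natDegree_antidiff {P : K[X]} (hP : P ≠ 0) : (antidiff P).natDegree = P.natDegree + 1 := by
  have hQ := antidiff_ne_zero hP
  have hlt := antidiff_sub_comp_X_sub_one P ▸ degree_sub_comp_X_sub_one_lt hQ
  have hle := mem_degreeLT.1 (antidiff_mem_degreeLT P)
  rw [degree_eq_natDegree hP, degree_eq_natDegree hQ] at *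
  norm_cast at hlt hle
  omega

theorem eval_antidiff_sub_eval_sub_one (P : K[X]) (x : K) :
    (antidiff P).eval x - (antidiff P).eval (x - 1) = P.eval x := by
  simpa only [eval_sub, eval_comp, eval_X, eval_one] using
    congrArg (eval x) (antidiff_sub_comp_X_sub_one P)

theorem eval_antidiff_natCast (P : K[X]) (n : ℕ) :
    (antidiff P).eval (n : K) = ∑ i ∈ Finset.Icc 1 n, P.eval (i : K) := by
  induction n with
  | zero => simp
  | succ n ih =>
    have h := eval_antidiff_sub_eval_sub_one P (n + 1)
    rw [add_sub_cancel_right] at h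
    rw [Finset.sum_Icc_succ_top (Nat.le_add_left 1 n), ← ih, Nat.cast_succ]
    linear_combination h

theorem eval_antidiff_neg_natCast {P : K[X]} {k : ℕ} (hP : ∀ j < k, P.eval (-(j : K)) = 0) :
    ∀ j ≤ k, (antidiff P).eval (-(j : K)) = 0 := by
  intro j hj
  induction j with
  | zero => simp
  | succ j ih =>
    have := eval_antidiff_sub_eval_sub_one P (-(j : K))
    rw [ih (by omega), hP j (by omega)] at this
    rw [Nat.cast_succ, neg_add', ← neg_eq_zero, ← this, zero_sub]

theorem antidiff_comp_neg_X_sub_C {P : K[X]} {a : K} {k : ℕ}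
    (hP : P.comp (-X - C a) = (-1) ^ k * P) (hroot : (antidiff P).eval (-(a + 1)) = 0) :
    (antidiff P).comp (-X - C (a + 1)) = (-1) ^ (k + 1) * antidiff P := by
  set Q := antidiff P
  have hsq : ((-1 : K[X]) ^ (k + 1)) ^ 2 = 1 := by
    rw [sq, ← pow_add, Even.neg_one_pow ⟨k + 1, rfl⟩]
  -- The reflected polynomial is an antiderivative of `P` vanishing at `0`.
  have hR : (-1) ^ (k + 1) * Q.comp (-X - C (a + 1)) = Q := by
    refine eq_antidiff ?_ ?_
    · have h1 : (-X - C (a + 1)).comp (X - 1) = -X - C a := by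
        rw [sub_comp, neg_comp, X_comp, C_comp, C_add, map_one]; ring
      have h2 : (X - 1 : K[X]).comp (-X - C a) = -X - C (a + 1) := by
        rw [sub_comp, X_comp, one_comp, C_add, map_one]; ring
      have hQ : Q.comp (X - 1) = Q - P := by
        linear_combination -antidiff_sub_comp_X_sub_one P
      have hsign : (-1 : K[X]) ^ (k + 1) * (-1) ^ k = -1 := by
        rw [← pow_add, Odd.neg_one_pow ⟨k, by ring⟩]
      rw [mul_comp, comp_assoc, h1, ← h2, ← comp_assoc, hQ, sub_comp, hP]
      simp only [pow_comp, neg_comp, one_comp]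
      linear_combination (-P) * hsign
    · simp only [eval_mul, eval_comp, eval_sub, eval_neg, eval_X, eval_C, neg_zero, zero_sub, hroot,
        mul_zero]
  linear_combination (-1) ^ (k + 1) * hR - Q.comp (-X - C (a + 1)) * hsq

end Field

section Domain

variable {R : Type*} [CommRing R] [IsDomain R]

theorem comp_eq_neg_one_pow_mul_of_mul_comp {A H s : R[X]} {i j : ℕ} (hA0 : A ≠ 0)
    (hA : A.comp s = (-1) ^ i * A) (hAH : (A * H).comp s = (-1) ^ (i + j) * (A * H)) :
    H.comp s = (-1) ^ j * H := by
  rw [mul_comp, hA, pow_add] at hAH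
  have hA0' : (-1) ^ i * A ≠ 0 := mul_ne_zero (pow_ne_zero _ (neg_ne_zero.2 one_ne_zero)) hA0
  exact mul_left_cancel₀ hA0' (by linear_combination hAH)

variable [CharZero R]

theorem ascPochhammer_dvd_of_eval_neg_natCast {P : R[X]} {k : ℕ}
    (hP : ∀ j < k, P.eval (-(j : R)) = 0) : ascPochhammer R k ∣ P := by
  induction k with
  | zero => simp
  | succ k ih =>
    obtain ⟨H, rfl⟩ := ih fun j hj => hP j (by omega)
    have hA : (ascPochhammer R k).eval (-(k : R)) ≠ 0 := by simp
    have hH : H.IsRoot (-(k : R)) := by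
      have := hP k k.lt_succ_self
      rw [eval_mul] at this
      exact (mul_eq_zero.1 this).resolve_left hA
    obtain ⟨H', rfl⟩ := dvd_iff_isRoot.2 hH
    rw [ascPochhammer_succ_right, ← mul_assoc, map_neg, sub_neg_eq_add, map_natCast]
    exact dvd_mul_right _ _

theorem ascPochhammer_comp_neg_X_sub_C (k : ℕ) :
    (ascPochhammer R k).comp (-X - C ((k : R) - 1)) = (-1) ^ k * ascPochhammer R k := by
  refine Polynomial.funext fun x => ?_
  have := ascPochhammer_eval_neg_eq_descPochhammer R (x + k - 1) k
  rw [descPochhammer_eval_eq_ascPochhammer] at this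
  simp only [eval_comp, eval_mul, eval_pow, eval_neg, eval_one, eval_sub, eval_X, eval_C]
  rw [show -x - ((k : R) - 1) = -(x + k - 1) by ring, this, show x + k - 1 - k + 1 = x by ring]

end Domain

end Polynomial

noncomputable def hyperSumPoly (m : ℕ) : ℕ → ℚ[X]
  | 0 => X ^ m
  | r + 1 => antidiff (hyperSumPoly m r)

theorem eval_hyperSumPoly (m r n : ℕ) : (hyperSumPoly m r).eval (n : ℚ) = S m r n := by
  induction r generalizing n with
  | zero => simp [hyperSumPoly, S]
  | succ r ih => simp only [hyperSumPoly, S, eval_antidiff_natCast, ih]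

theorem hyperSumPoly_ne_zero (m r : ℕ) : hyperSumPoly m r ≠ 0 := by
  induction r with
  | zero => exact pow_ne_zero _ X_ne_zero
  | succ r ih => exact antidiff_ne_zero ih

theorem natDegree_hyperSumPoly (m r : ℕ) : (hyperSumPoly m r).natDegree = m + r := by
  induction r with
  | zero => simp [hyperSumPoly]
  | succ r ih => rw [hyperSumPoly, natDegree_antidiff (hyperSumPoly_ne_zero m r), ih, add_assoc]

theorem hyperSumPoly_eval_neg_natCast {m : ℕ} (hm : m ≠ 0) :
    ∀ r, ∀ j ≤ r, (hyperSumPoly m r).eval (-(j : ℚ)) = 0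
  | 0, j, hj => by simp [hyperSumPoly, Nat.le_zero.1 hj, hm]
  | r + 1, _, hj =>
    eval_antidiff_neg_natCast (fun j hj => hyperSumPoly_eval_neg_natCast hm r j (by omega)) _ hj

theorem hyperSumPoly_comp_neg_X_sub_C {m : ℕ} (hm : m ≠ 0) :
    ∀ r : ℕ, (hyperSumPoly m r).comp (-X - C (r : ℚ)) = (-1) ^ (m + r) * hyperSumPoly m r
  | 0 => by
    simp only [hyperSumPoly, pow_comp, X_comp, Nat.cast_zero, map_zero, sub_zero, add_zero]
    exact neg_pow X m
  | r + 1 => by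
    have hroot := hyperSumPoly_eval_neg_natCast hm (r + 1) (r + 1) le_rfl
    push_cast at hroot ⊢
    exact antidiff_comp_neg_X_sub_C (hyperSumPoly_comp_neg_X_sub_C hm r) hroot

theorem exists_hyperSumPoly_eq_ascPochhammer_mul {m : ℕ} (hm : m ≠ 0) (r : ℕ) :
    ∃ H : ℚ[X], hyperSumPoly m r = ascPochhammer ℚ (r + 1) * H ∧ H.natDegree = m - 1 ∧
      H.comp (-X - C (r : ℚ)) = (-1) ^ (m - 1) * H := by
  obtain ⟨H, hH⟩ := ascPochhammer_dvd_of_eval_neg_natCast fun j hj =>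
    hyperSumPoly_eval_neg_natCast hm r j (Nat.lt_succ_iff.1 hj)
  have hA0 : ascPochhammer ℚ (r + 1) ≠ 0 := (monic_ascPochhammer ℚ (r + 1)).ne_zero
  have hH0 : H ≠ 0 := fun h => hyperSumPoly_ne_zero m r (by rw [hH, h, mul_zero])
  refine ⟨H, hH, ?_, ?_⟩
  · have := natDegree_mul hA0 hH0
    rw [← hH, natDegree_hyperSumPoly, ascPochhammer_natDegree] at this
    omega
  · have hA := ascPochhammer_comp_neg_X_sub_C (R := ℚ) (r + 1)
    push_cast at hA
    rw [add_sub_cancel_right] at hA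
    refine comp_eq_neg_one_pow_mul_of_mul_comp hA0 hA ?_
    rw [← hH, hyperSumPoly_comp_neg_X_sub_C hm, show r + 1 + (m - 1) = m + r by omega]

theorem stmt_9_general (r m : ℕ) (hm : 1 ≤ m) :
    ∃ G : Polynomial ℚ, G.natDegree = m - 1 ∧
      (∀ x : ℚ, G.eval (-x) = (-1 : ℚ) ^ (m - 1) * G.eval x) ∧
      ∀ n : ℕ, 1 ≤ n →
        S m r n = ((n + r).choose (r + 1) : ℚ) * G.eval ((n : ℚ) + r / 2) := by
  obtain ⟨H, hPH, hdeg, hsym⟩ := exists_hyperSumPoly_eq_ascPochhammer_mul (by omega : m ≠ 0) r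
  refine ⟨C ((r + 1).factorial : ℚ) * H.comp (X - C ((r : ℚ) / 2)), ?_, fun x => ?_, fun n _ => ?_⟩
  · rw [natDegree_C_mul (by positivity), natDegree_comp, natDegree_X_sub_C, mul_one, hdeg]
  · have := congrArg (eval (x - r / 2)) hsym
    simp only [eval_comp, eval_mul, eval_pow, eval_neg, eval_one, eval_sub, eval_X, eval_C]
      at this ⊢
    rw [show -x - r / 2 = -(x - r / 2) - r by ring, this]
    ring
  · rw [← eval_hyperSumPoly, hPH, eval_mul, ascPochhammer_nat_eq_natCast_ascFactorial,
      Nat.ascFactorial_eq_factorial_mul_choose', Nat.add_succ_sub_one]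
    simp only [eval_mul, eval_C, eval_comp, eval_sub, eval_X, add_sub_cancel_right]
    push_cast
    ring

theorem stmt_9 (r m : ℕ) (hr : 1 ≤ r) (hm : 1 ≤ m) :
    ∃ G : Polynomial ℚ, G.natDegree = m - 1 ∧
      (∀ x : ℚ, G.eval (-x) = (-1 : ℚ) ^ (m - 1) * G.eval x) ∧
      ∀ n : ℕ, 1 ≤ n →
        S m r n = ((n + r).choose (r + 1) : ℚ) * G.eval ((n : ℚ) + r / 2) :=
  stmt_9_general r m hm
end

section
/- For all integers r ≥ 0 and n ≥ 1, (r+2)(r+3) · S_3^{(r)}(n) = C(n+r, r+1) · (6n² + 6rn + r(r−1)). -/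
open Finset

section PartialSum

variable (R M : Type*) [Semiring R] [AddCommMonoid M] [Module R M]

def partialSum : Module.End R (ℕ → M) where
  toFun f n := ∑ i ∈ Icc 1 n, f i
  map_add' f g := by ext n; simp [sum_add_distrib]
  map_smul' c f := by ext n; simp [smul_sum]

variable {R M}

@[simp]
theorem partialSum_apply (f : ℕ → M) (n : ℕ) :
    partialSum R M f n = ∑ i ∈ Icc 1 n, f i :=
  rfl

theorem partialSum_succ (f : ℕ → M) (n : ℕ) :
    partialSum R M f (n + 1) = partialSum R M f n + f (n + 1) := by
  simp [sum_Icc_succ_top (Nat.le_add_left 1 n)]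

theorem partialSum_choose {a b : ℕ} (hab : a < b) :
    partialSum R R (fun n => ((n + a).choose b : R)) =
      fun n => ((n + a + 1).choose (b + 1) : R) := by
  ext n
  induction n with
  | zero => simp [Nat.choose_eq_zero_of_lt (by omega : a + 1 < b + 1)]
  | succ n ih =>
    rw [partialSum_succ, ih, show n + 1 + a + 1 = n + a + 1 + 1 by omega,
      Nat.choose_succ_succ' (n + a + 1), show n + 1 + a = n + a + 1 by omega, Nat.cast_add,
      add_comm]

theorem partialSum_pow_choose {a b : ℕ} (hab : a < b) (r : ℕ) :
    (partialSum R R ^ r) (fun n => ((n + a).choose b : R)) =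
      fun n => ((n + r + a).choose (r + b) : R) := by
  induction r with
  | zero => simp
  | succ r ih =>
    have step := partialSum_choose (R := R) (show r + a < r + b by omega)
    simp only [← add_assoc] at step
    rw [pow_succ', Module.End.mul_apply, ih, step]
    ext n
    congr 2 <;> ring

end PartialSum

theorem S_eq_partialSum_pow (m r : ℕ) :
    S m r = (partialSum ℚ ℚ ^ r) (fun n => (n : ℚ) ^ m) := by
  induction r with
  | zero => rfl
  | succ r ih => ext n; rw [pow_succ', Module.End.mul_apply, ← ih]; rfl

theorem cast_cube_eq_choose (n : ℕ) :
    (n : ℚ) ^ 3 = 6 * (n + 2).choose 3 - 6 * (n + 1).choose 2 + n := by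
  simp only [Nat.cast_choose_eq_descPochhammer_div, descPochhammer_succ_right, descPochhammer_zero,
    Polynomial.eval_mul, Polynomial.eval_sub, Polynomial.eval_X, Polynomial.eval_one,
    Polynomial.eval_natCast]
  push_cast [Nat.factorial]
  ring

theorem S_three_eq_choose (r n : ℕ) :
    S 3 r n = 6 * (n + r + 2).choose (r + 3) - 6 * (n + r + 1).choose (r + 2)
      + (n + r).choose (r + 1) := by
  have hcube : (fun n : ℕ => (n : ℚ) ^ 3) = 6 • (fun n => ((n + 2).choose 3 : ℚ))
      - 6 • (fun n => ((n + 1).choose 2 : ℚ)) + fun n => ((n + 0).choose 1 : ℚ) := by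
    ext n
    simpa using cast_cube_eq_choose n
  rw [S_eq_partialSum_pow, hcube, map_add, map_sub, map_nsmul, map_nsmul,
    partialSum_pow_choose (by norm_num : 2 < 3), partialSum_pow_choose one_lt_two,
    partialSum_pow_choose zero_lt_one]
  simp

theorem stmt_11_general (r n : ℕ) :
    ((r : ℚ) + 2) * ((r : ℚ) + 3) * S 3 r n
      = ((n + r).choose (r + 1) : ℚ)
          * (6 * (n : ℚ) ^ 2 + 6 * (r : ℚ) * (n : ℚ) + (r : ℚ) * ((r : ℚ) - 1)) := by
  have h₁ := Nat.add_one_mul_choose_eq (n + r) (r + 1)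
  have h₂ := Nat.add_one_mul_choose_eq (n + r + 1) (r + 2)
  rw [← Nat.cast_inj (R := ℚ)] at h₁ h₂
  push_cast at h₁ h₂
  rw [S_three_eq_choose]
  linear_combination (-6 * ((n : ℚ) - 1)) * h₁ - 6 * ((r : ℚ) + 2) * h₂

theorem stmt_11 (r n : ℕ) (hn : 1 ≤ n) :
    ((r : ℚ) + 2) * ((r : ℚ) + 3) * S 3 r n
      = ((n + r).choose (r + 1) : ℚ)
          * (6 * (n : ℚ) ^ 2 + 6 * (r : ℚ) * (n : ℚ) + (r : ℚ) * ((r : ℚ) - 1)) :=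
  stmt_11_general r n
end

section
/- For all integers m ≥ 1, r ≥ 0, and n ≥ 1: S_{2m-1}^{(r+1)}(n) = (1/2) · S_{2m-1}^{(r)}(n) + (1/(2m)) · Σ_{k=1}^{m} C(2m, 2k) · B_{2m−2k} · S_{2k}^{(r)}(n), where B_j denotes the Bernoulli numbers. -/
/-! Faulhaber's formula for `∑_{i=1}^n i^(2m-1)` is a linear relation between first- and
zeroth-order hyper-sums; since summation over `[1, n]` is linear, the same relation holds between
the hyper-sums of orders `r + 1` and `r` for every `r`. -/

open Finset

theorem Finset.sum_range_two_mul {M : Type*} [AddCommMonoid M] (f : ℕ → M) (m : ℕ) :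
    ∑ i ∈ range (2 * m), f i = ∑ j ∈ range m, f (2 * j) + ∑ j ∈ range m, f (2 * j + 1) := by
  induction m with
  | zero => simp
  | succ m ih =>
    rw [show 2 * (m + 1) = 2 * m + 1 + 1 by ring, sum_range_succ, sum_range_succ, ih,
      sum_range_succ, sum_range_succ]
    abel

theorem sum_range_bernoulli'_odd_terms (x : ℚ) {m : ℕ} (hm : 1 ≤ m) :
    ∑ j ∈ range m, bernoulli' (2 * j + 1) * ((2 * m).choose (2 * j + 1) : ℚ)
        * x ^ (2 * m - (2 * j + 1)) / (2 * m : ℕ) = 1 / 2 * x ^ (2 * m - 1) := by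
  obtain ⟨m, rfl⟩ := Nat.exists_eq_add_of_le' hm
  have hvanish : ∀ j ∈ range m, bernoulli' (2 * (j + 1) + 1)
      * ((2 * (m + 1)).choose (2 * (j + 1) + 1) : ℚ) * x ^ (2 * (m + 1) - (2 * (j + 1) + 1))
      / (2 * (m + 1) : ℕ) = 0 := fun j _ ↦ by
    rw [bernoulli'_eq_zero_of_odd ⟨j + 1, rfl⟩ (by omega)]
    simp
  rw [sum_range_succ', sum_congr rfl hvanish, sum_const_zero, zero_add, bernoulli'_one,
    Nat.choose_one_right]
  field_simp

theorem sum_range_bernoulli'_even_terms (x : ℚ) (m : ℕ) :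
    ∑ j ∈ range m, bernoulli' (2 * j) * ((2 * m).choose (2 * j) : ℚ)
        * x ^ (2 * m - 2 * j) / (2 * m : ℕ)
      = 1 / (2 * (m : ℚ)) * ∑ k ∈ Icc 1 m,
          ((2 * m).choose (2 * k) : ℚ) * bernoulli (2 * m - 2 * k) * x ^ (2 * k) := by
  rw [mul_sum]
  refine sum_nbij' (m - ·) (m - ·) (by simp; omega) (by simp; omega) (by simp; omega)
    (by simp; omega) fun j hj ↦ ?_
  rw [mem_range] at hj
  rw [show 2 * (m - j) = 2 * m - 2 * j by omega, show 2 * m - (2 * m - 2 * j) = 2 * j by omega,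
    Nat.choose_symm (by omega), bernoulli_eq_bernoulli'_of_ne_one (by omega)]
  push_cast
  ring

theorem sum_Icc_pow_odd (n : ℕ) {m : ℕ} (hm : 1 ≤ m) :
    ∑ i ∈ Icc 1 n, (i : ℚ) ^ (2 * m - 1)
      = 1 / 2 * (n : ℚ) ^ (2 * m - 1)
        + 1 / (2 * (m : ℚ)) * ∑ k ∈ Icc 1 m,
            ((2 * m).choose (2 * k) : ℚ) * bernoulli (2 * m - 2 * k) * (n : ℚ) ^ (2 * k) := by
  have hsucc : 2 * m - 1 + 1 = 2 * m := by omega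
  have hsuccQ : ((2 * m - 1 : ℕ) : ℚ) + 1 = (2 * m : ℕ) := by exact_mod_cast hsucc
  rw [← Finset.Ico_add_one_right_eq_Icc, sum_Ico_pow, hsucc, hsuccQ, sum_range_two_mul,
    sum_range_bernoulli'_even_terms, sum_range_bernoulli'_odd_terms _ hm, add_comm]

theorem S_succ_eq_of_S_one_eq {p : ℕ} {c : ℚ} {s : Finset ℕ} {a : ℕ → ℚ} {e : ℕ → ℕ}
    (h : ∀ n, S p 1 n = c * S p 0 n + ∑ k ∈ s, a k * S (e k) 0 n) (r n : ℕ) :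
    S p (r + 1) n = c * S p r n + ∑ k ∈ s, a k * S (e k) r n := by
  induction r generalizing n with
  | zero => exact h n
  | succ r ih =>
    change ∑ i ∈ Icc 1 n, S p (r + 1) i
      = c * ∑ i ∈ Icc 1 n, S p r i + ∑ k ∈ s, a k * ∑ i ∈ Icc 1 n, S (e k) r i
    simp only [ih, sum_add_distrib, mul_sum]
    rw [sum_comm]

theorem stmt_15_general (m r n : ℕ) (hm : 1 ≤ m) :
    S (2 * m - 1) (r + 1) n
      = (1 / 2) * S (2 * m - 1) r n
        + (1 / (2 * (m : ℚ))) * ∑ k ∈ Finset.Icc 1 m,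
            ((2 * m).choose (2 * k) : ℚ) * bernoulli (2 * m - 2 * k) * S (2 * k) r n := by
  have faulhaber : ∀ n, S (2 * m - 1) 1 n = 1 / 2 * S (2 * m - 1) 0 n
      + ∑ k ∈ Icc 1 m, 1 / (2 * (m : ℚ)) * ((2 * m).choose (2 * k) * bernoulli (2 * m - 2 * k))
        * S (2 * k) 0 n := fun n ↦ by
    simp only [S, sum_Icc_pow_odd n hm, mul_sum, mul_assoc]
  rw [S_succ_eq_of_S_one_eq faulhaber, mul_sum]
  simp only [mul_assoc]

theorem stmt_15 (m r n : ℕ) (hm : 1 ≤ m) (hn : 1 ≤ n) :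
    S (2 * m - 1) (r + 1) n
      = (1 / 2) * S (2 * m - 1) r n
        + (1 / (2 * (m : ℚ))) * ∑ k ∈ Finset.Icc 1 m,
            ((2 * m).choose (2 * k) : ℚ) * bernoulli (2 * m - 2 * k) * S (2 * k) r n :=
  stmt_15_general m r n hm
end

section
/- For any positive integer r and all n ≥ 1, r! · C(n+r, r+1) = Σ_{j=1}^{r} [r choose j]_s · S_j(n), where [r choose j]_s denotes the unsigned Stirling numbers of the first kind and S_j(n) = Σ_{k=1}^n k^j. -/
/-!
The Stirling numbers of the first kind are the coefficients of the rising factorial: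
`∑ⱼ [r, j] x^j = x (x + 1) ⋯ (x + r - 1)`. Evaluated at `x = k` this is `r! * C(k + r - 1, r)`,
so summing over `1 ≤ k ≤ n` and applying the hockey-stick identity gives `r! * C(n + r, r + 1)`.
-/

/-- Unsigned Stirling numbers of the first kind:
`stirling1 n k` counts permutations of `n` elements with `k` cycles. -/
def stirling1 : ℕ → ℕ → ℕ
  | 0, 0 => 1
  | 0, _ + 1 => 0
  | _ + 1, 0 => 0
  | n + 1, k + 1 => n * stirling1 n (k + 1) + stirling1 n k

open Finset Polynomial Nat

theorem stirling1_eq_stirlingFirst : stirling1 = stirlingFirst := by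
  funext n k
  induction n generalizing k with
  | zero => cases k <;> rfl
  | succ n ih => cases k <;> simp [stirling1, stirlingFirst_succ_succ, ih]

theorem ascPochhammer_eq_sum_stirlingFirst (S : Type*) [CommSemiring S] (r : ℕ) :
    ascPochhammer S r = ∑ j ∈ range (r + 1), (stirlingFirst r j : S[X]) * X ^ j := by
  induction r with
  | zero => simp
  | succ r ih =>
    -- the index shift is free because `[r, r + 1] = 0` and `r * [r, 0] = 0`
    have h_shift : (r : S[X]) * ∑ j ∈ range (r + 1), (stirlingFirst r j : S[X]) * X ^ j
        = (r : S[X]) * ∑ j ∈ range (r + 1), (stirlingFirst r (j + 1) : S[X]) * X ^ (j + 1) := by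
      calc (r : S[X]) * ∑ j ∈ range (r + 1), (stirlingFirst r j : S[X]) * X ^ j
          = (r : S[X]) * ∑ j ∈ range (r + 1 + 1), (stirlingFirst r j : S[X]) * X ^ j := by
            simp [sum_range_succ _ (r + 1), stirlingFirst_eq_zero_of_lt (lt_add_one r)]
        _ = (r : S[X]) * ∑ j ∈ range (r + 1), (stirlingFirst r (j + 1) : S[X]) * X ^ (j + 1)
            + (r : S[X]) * stirlingFirst r 0 := by
            rw [sum_range_succ', mul_add, pow_zero, mul_one]
        _ = _ := by cases r <;> simp
    calc ascPochhammer S (r + 1)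
        = (∑ j ∈ range (r + 1), (stirlingFirst r j : S[X]) * X ^ j) * (X + (r : S[X])) := by
          rw [ascPochhammer_succ_right, ih]
      _ = ∑ j ∈ range (r + 1), (stirlingFirst r j : S[X]) * X ^ (j + 1)
            + r * ∑ j ∈ range (r + 1), (stirlingFirst r j : S[X]) * X ^ j := by
          rw [mul_add, sum_mul, mul_comm _ (r : S[X])]
          simp only [pow_succ, mul_assoc]
      _ = ∑ j ∈ range (r + 1), (stirlingFirst (r + 1) (j + 1) : S[X]) * X ^ (j + 1) := by
          rw [h_shift, mul_sum, ← sum_add_distrib]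
          simp only [stirlingFirst_succ_succ, Nat.cast_add, Nat.cast_mul, add_mul, mul_assoc,
            add_comm]
      _ = ∑ j ∈ range (r + 1 + 1), (stirlingFirst (r + 1) j : S[X]) * X ^ j := by
          simp [sum_range_succ' _ (r + 1)]

theorem sum_Icc_stirlingFirst_mul_pow {R : Type*} [CommSemiring R] {r : ℕ} (hr : r ≠ 0) (x : R) :
    ∑ j ∈ Icc 1 r, (stirlingFirst r j : R) * x ^ j = (ascPochhammer R r).eval x := by
  rw [ascPochhammer_eq_sum_stirlingFirst, eval_finsetSum, range_eq_Ico,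
    sum_eq_sum_Ico_succ_bot (Nat.succ_pos r), ← Ico_add_one_right_eq_Icc]
  obtain ⟨r, rfl⟩ := Nat.exists_eq_succ_of_ne_zero hr
  simp

theorem sum_Icc_ascFactorial (r n : ℕ) :
    ∑ k ∈ Icc 1 n, k.ascFactorial r = r ! * (n + r).choose (r + 1) := by
  induction n with
  | zero => simp
  | succ n ih =>
    rw [sum_Icc_succ_top (Nat.le_add_left 1 n), ih, ascFactorial_eq_factorial_mul_choose,
      Nat.add_right_comm, choose_succ_succ', mul_add, add_comm]

theorem stmt_19_general (r n : ℕ) (hr : 1 ≤ r) :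
    (r.factorial : ℚ) * ((n + r).choose (r + 1) : ℚ)
      = ∑ j ∈ Finset.Icc 1 r, (stirling1 r j : ℚ) * ∑ k ∈ Finset.Icc 1 n, (k : ℚ) ^ j := by
  simp_rw [stirling1_eq_stirlingFirst, mul_sum]
  rw [sum_comm]
  simp_rw [sum_Icc_stirlingFirst_mul_pow (Nat.one_le_iff_ne_zero.mp hr), ← cast_ascFactorial]
  exact_mod_cast (sum_Icc_ascFactorial r n).symm

theorem stmt_19 (r n : ℕ) (hr : 1 ≤ r) (hn : 1 ≤ n) :
    (r.factorial : ℚ) * ((n + r).choose (r + 1) : ℚ)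
      = ∑ j ∈ Finset.Icc 1 r, (stirling1 r j : ℚ) * ∑ k ∈ Finset.Icc 1 n, (k : ℚ) ^ j :=
  stmt_19_general r n hr
end
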